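/- arXiv:1306.0857 — 5 statements merged into one kernel-verified Lean document; each statement's English description precedes it below -/
import Mathlib

section
/- Let α, β > 0 and let Λ(y,x) = (1/B(α,β)) · y^{−1} · (x/y)^{α−1} · (1 − x/y)^{β−1} on the domain {(y,x) ∈ ℝ² : 0 < x < y}. Then Λ satisfies, pointwise on {0 < x < y}, the identity 2·(−α ∂ₓ + 2∂ₓ + x∂ₓₓ)Λ = 2·((α+β)∂ᵧ + y∂ᵧᵧ)Λ, i.e., (2 − α)∂ₓΛ + x∂ₓₓΛ = (α+β)∂ᵧΛ + y∂ᵧᵧΛ. -/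
open Real MeasureTheory

/-- derivative in `t` of `t^p * (y-t)^q`. -/
lemma aux_bb (p q y : ℝ) {x : ℝ} (hx : x ≠ 0) (hxy : y - x ≠ 0) :
    HasDerivAt (fun t : ℝ => t ^ p * (y - t) ^ q)
      (p * x ^ (p - 1) * (y - x) ^ q + x ^ p * (-1 * q * (y - x) ^ (q - 1))) x := by
  have h1 : HasDerivAt (fun t : ℝ => t ^ p) (p * x ^ (p - 1)) x :=
    Real.hasDerivAt_rpow_const (Or.inl hx)
  have h0 : HasDerivAt (fun t : ℝ => y - t) (-1) x := by
    simpa using (hasDerivAt_id x).const_sub y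
  have h2 : HasDerivAt (fun t : ℝ => (y - t) ^ q) (-1 * q * (y - x) ^ (q - 1)) x :=
    h0.rpow_const (Or.inl hxy)
  exact h1.mul h2

/-- derivative in `s` of `(s-x)^q * s^r`. -/
lemma aux_cc (q r x : ℝ) {y : ℝ} (hy : y ≠ 0) (hxy : y - x ≠ 0) :
    HasDerivAt (fun s : ℝ => (s - x) ^ q * s ^ r)
      (1 * q * (y - x) ^ (q - 1) * y ^ r + (y - x) ^ q * (r * y ^ (r - 1))) y := by
  have h0 : HasDerivAt (fun s : ℝ => s - x) 1 y := (hasDerivAt_id y).sub_const x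
  have h1 : HasDerivAt (fun s : ℝ => (s - x) ^ q) (1 * q * (y - x) ^ (q - 1)) y :=
    h0.rpow_const (Or.inl hxy)
  have h2 : HasDerivAt (fun s : ℝ => s ^ r) (r * y ^ (r - 1)) y :=
    Real.hasDerivAt_rpow_const (Or.inl hy)
  exact h1.mul h2

/-- rewrite the kernel in separated-power form. -/
lemma aux_conv (α β B : ℝ) {s t : ℝ} (ht : 0 < t) (hts : t < s) :
    (1 / B) * s⁻¹ * (t / s) ^ (α - 1) * (1 - t / s) ^ (β - 1)
      = 1 / B * (t ^ (α - 1) * (s - t) ^ (β - 1) * s ^ (1 - α - β)) := by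
  have hs : 0 < s := ht.trans hts
  have hst : 0 < s - t := by linarith
  have h1 : (1 : ℝ) - t / s = (s - t) / s := by field_simp
  have e : (1 - α - β) = (-(α - 1)) + ((-(β - 1)) + (-1)) := by ring
  rw [h1, Real.div_rpow ht.le hs.le, Real.div_rpow hst.le hs.le, e,
    Real.rpow_add hs, Real.rpow_add hs, Real.rpow_neg hs.le, Real.rpow_neg hs.le,
    Real.rpow_neg hs.le, Real.rpow_one]
  have ha := (Real.rpow_pos_of_pos hs (α - 1)).ne'
  have hb := (Real.rpow_pos_of_pos hs (β - 1)).ne'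
  field_simp

set_option maxHeartbeats 1600000 in
/-- The Beta-Gamma algebra link kernel solves the hyperbolic PDE
`(A^X)* Λ = A^Y Λ` on `{0 < x < y}`, i.e.
`(2-α) ∂ₓΛ + x ∂ₓₓΛ = (α+β) ∂ᵧΛ + y ∂ᵧᵧΛ`. -/
theorem stmt_3 (α β : ℝ) (hα : 0 < α) (hβ : 0 < β) (B : ℝ)
    (hB : B = ∫ z in (0:ℝ)..1, z ^ (α - 1) * (1 - z) ^ (β - 1))
    (Λ : ℝ → ℝ → ℝ)
    (hΛ : ∀ y x : ℝ, 0 < x → x < y →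
      Λ y x = (1 / B) * y⁻¹ * (x / y) ^ (α - 1) * (1 - x / y) ^ (β - 1)) :
    ∀ y x : ℝ, 0 < x → x < y →
      (-α + 2) * deriv (fun x' => Λ y x') x
        + x * deriv (fun x' => deriv (fun x'' => Λ y x'') x') x
      = (α + β) * deriv (fun y' => Λ y' x) y
        + y * deriv (fun y' => deriv (fun y'' => Λ y'' x) y') y := by
  intro y x hx0 hxy
  have hy0 : 0 < y := hx0.trans hxy
  have hyx : 0 < y - x := by linarith
  -- the x-direction first derivative function on (0, y)
  set d1 : ℝ → ℝ := fun t =>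
    (1 / B * y ^ (1 - α - β) * (α - 1)) * (t ^ (α - 1 - 1) * (y - t) ^ (β - 1))
      + (-(1 / B * y ^ (1 - α - β)) * (β - 1)) * (t ^ (α - 1) * (y - t) ^ (β - 1 - 1))
    with hd1def
  have hD1 : ∀ t : ℝ, 0 < t → t < y → deriv (fun t' => Λ y t') t = d1 t := by
    intro t ht0 hty
    have htyx : y - t ≠ 0 := sub_ne_zero.mpr hty.ne'
    have hev : (fun t' => Λ y t') =ᶠ[nhds t]
        (fun t' => (t' ^ (α - 1) * (y - t') ^ (β - 1)) * (1 / B * y ^ (1 - α - β))) := by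
      filter_upwards [Ioo_mem_nhds ht0 hty] with u hu
      rw [hΛ y u hu.1 hu.2, aux_conv α β B hu.1 hu.2]; ring
    rw [hev.deriv_eq, ((aux_bb (α - 1) (β - 1) y ht0.ne' htyx).mul_const
      (1 / B * y ^ (1 - α - β))).deriv, hd1def]
    ring
  -- the y-direction first derivative function on (x, ∞)
  set e1 : ℝ → ℝ := fun s =>
    (1 / B * x ^ (α - 1) * (β - 1)) * ((s - x) ^ (β - 1 - 1) * s ^ (1 - α - β))
      + (1 / B * x ^ (α - 1) * (1 - α - β)) * ((s - x) ^ (β - 1) * s ^ (1 - α - β - 1))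
    with he1def
  have hE1 : ∀ s : ℝ, x < s → deriv (fun s' => Λ s' x) s = e1 s := by
    intro s hxs
    have hs0 : 0 < s := hx0.trans hxs
    have hsx : s - x ≠ 0 := sub_ne_zero.mpr (ne_of_gt hxs)
    have hev : (fun s' => Λ s' x) =ᶠ[nhds s]
        (fun s' => ((s' - x) ^ (β - 1) * s' ^ (1 - α - β)) * (1 / B * x ^ (α - 1))) := by
      filter_upwards [Ioi_mem_nhds hxs] with u hu
      have hu' : x < u := hu
      rw [hΛ u x hx0 hu', aux_conv α β B hx0 hu']; ring
    rw [hev.deriv_eq, ((aux_cc (β - 1) (1 - α - β) x hs0.ne' hsx).mul_const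
      (1 / B * x ^ (α - 1))).deriv, he1def]
    ring
  -- second derivative in x
  have hd2 : HasDerivAt d1
      ((1 / B * y ^ (1 - α - β) * (α - 1)) *
        ((α - 1 - 1) * x ^ (α - 1 - 1 - 1) * (y - x) ^ (β - 1)
          + x ^ (α - 1 - 1) * (-1 * (β - 1) * (y - x) ^ (β - 1 - 1)))
        + (-(1 / B * y ^ (1 - α - β)) * (β - 1)) *
        ((α - 1) * x ^ (α - 1 - 1) * (y - x) ^ (β - 1 - 1)
          + x ^ (α - 1) * (-1 * (β - 1 - 1) * (y - x) ^ (β - 1 - 1 - 1)))) x :=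
    ((aux_bb (α - 1 - 1) (β - 1) y hx0.ne' hyx.ne').const_mul _).add
      ((aux_bb (α - 1) (β - 1 - 1) y hx0.ne' hyx.ne').const_mul _)
  have hevx : (fun t => deriv (fun t' => Λ y t') t) =ᶠ[nhds x] d1 := by
    filter_upwards [Ioo_mem_nhds hx0 hxy] with u hu
    exact hD1 u hu.1 hu.2
  have hD2 := hevx.deriv_eq.trans hd2.deriv
  -- second derivative in y
  have he2 : HasDerivAt e1
      ((1 / B * x ^ (α - 1) * (β - 1)) *
        (1 * (β - 1 - 1) * (y - x) ^ (β - 1 - 1 - 1) * y ^ (1 - α - β)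
          + (y - x) ^ (β - 1 - 1) * ((1 - α - β) * y ^ (1 - α - β - 1)))
        + (1 / B * x ^ (α - 1) * (1 - α - β)) *
        (1 * (β - 1) * (y - x) ^ (β - 1 - 1) * y ^ (1 - α - β - 1)
          + (y - x) ^ (β - 1) * ((1 - α - β - 1) * y ^ (1 - α - β - 1 - 1)))) y :=
    ((aux_cc (β - 1 - 1) (1 - α - β) x hy0.ne' hyx.ne').const_mul _).add
      ((aux_cc (β - 1) (1 - α - β - 1) x hy0.ne' hyx.ne').const_mul _)
  have hevy : (fun s => deriv (fun s' => Λ s' x) s) =ᶠ[nhds y] e1 := by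
    filter_upwards [Ioi_mem_nhds hxy] with u hu
    exact hE1 u hu
  have hE2 := hevy.deriv_eq.trans he2.deriv
  rw [hD1 x hx0 hxy, hE1 y hxy, hD2, hE2, hd1def, he1def]
  beta_reduce
  -- now pure rpow algebra
  have hxa1 : x ^ (α - 1 - 1) = x ^ (α - 1) / x := by
    rw [Real.rpow_sub hx0, Real.rpow_one]
  have hxa2 : x ^ (α - 1 - 1 - 1) = x ^ (α - 1) / x / x := by
    rw [Real.rpow_sub hx0, Real.rpow_sub hx0, Real.rpow_one]
  have hzb1 : (y - x) ^ (β - 1 - 1) = (y - x) ^ (β - 1) / (y - x) := by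
    rw [Real.rpow_sub hyx, Real.rpow_one]
  have hzb2 : (y - x) ^ (β - 1 - 1 - 1) = (y - x) ^ (β - 1) / (y - x) / (y - x) := by
    rw [Real.rpow_sub hyx, Real.rpow_sub hyx, Real.rpow_one]
  have hyc1 : y ^ (1 - α - β - 1) = y ^ (1 - α - β) / y := by
    rw [Real.rpow_sub hy0, Real.rpow_one]
  have hyc2 : y ^ (1 - α - β - 1 - 1) = y ^ (1 - α - β) / y / y := by
    rw [Real.rpow_sub hy0, Real.rpow_sub hy0, Real.rpow_one]
  rw [hxa2, hxa1, hzb2, hzb1, hyc2, hyc1]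
  generalize x ^ (α - 1) = X
  generalize (y - x) ^ (β - 1) = Z
  generalize y ^ (1 - α - β) = W
  obtain hB0 | hB0 := eq_or_ne B 0
  · subst hB0; norm_num
  · field_simp [hB0, hx0.ne', hy0.ne', hyx.ne']
    ring
end

section
/- With the notation of the previous statement, if additionally ∑_{l∈I} |c_l|·l² < ∞, then Λ(y,x) = 1 + ∑_{l∈I} c_l T_l(y) cos(lx) is twice continuously differentiable and satisfies the hyperbolic PDE (1/2)∂ₓₓΛ(y,x) = (1/2)(−y ∂ᵧΛ(y,x) + (1−y²) ∂ᵧᵧΛ(y,x)) for all (y,x) ∈ (−1,1) × ℝ. -/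
/-!
Put `y = cos θ`. Since `T_l (cos θ) = cos (l θ)` and
`2 cos (l θ) cos (l x) = cos (l (θ + x)) + cos (l (θ - x))`, we get
`Λ (cos θ) x = ψ (θ + x) + ψ (θ - x)` with `ψ s = 1/2 + ∑ (c_l / 2) cos (l s)`, and `ψ` is `C²`
because `∑ |c_l| l² < ∞`. A d'Alembert solution `ψ (θ + x) + ψ (θ - x)` satisfies `∂θθ = ∂xx`,
and the chain rule through `y = cos θ` turns `∂θθ` into `-y ∂_y + (1 - y²) ∂_yy`. Smoothness in
`(y, x)` on `(-1, 1) × ℝ` follows by substituting `θ = arccos y`.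
-/

open Real Filter Topology

lemma pow_le_one_add_pow {x : ℝ} (hx : 0 ≤ x) {k n : ℕ} (hkn : k ≤ n) :
    x ^ k ≤ 1 + x ^ n := by
  rcases le_total x 1 with h | h
  · linarith [pow_le_one₀ hx h (n := k), pow_nonneg hx n]
  · linarith [pow_le_pow_right₀ h hkn]

lemma abs_iteratedDeriv_mul_cos_le (a ω : ℝ) (k : ℕ) (s : ℝ) :
    |iteratedDeriv k (fun s => a * cos (ω * s)) s| ≤ |a| * |ω| ^ k := by
  rw [iteratedDeriv_const_mul_field, iteratedDeriv_comp_const_mul contDiff_cos, abs_mul,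
    abs_mul, abs_pow]
  gcongr
  exact mul_le_of_le_one_right (by positivity) (abs_iteratedDeriv_cos_le_one k _)

noncomputable def cosSeries {ι : Type*} (a ω : ι → ℝ) (s : ℝ) : ℝ :=
  ∑' i, a i * cos (ω i * s)

section CosSeries

variable {ι : Type*} {a ω : ι → ℝ}

lemma summable_mul_cos (ha : Summable fun i => |a i|) (s : ℝ) :
    Summable fun i => a i * cos (ω i * s) :=
  .of_norm_bounded ha fun i => by
    simpa [abs_mul] using mul_le_of_le_one_right (abs_nonneg (a i)) (abs_cos_le_one _)

theorem contDiff_cosSeries (n : ℕ) (ha : Summable fun i => |a i|)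
    (haω : Summable fun i => |a i| * |ω i| ^ n) : ContDiff ℝ n (cosSeries a ω) := by
  refine contDiff_tsum (v := fun k i => |a i| + |a i| * |ω i| ^ n)
    (fun i => contDiff_const.mul (contDiff_cos.comp (contDiff_const.mul contDiff_id)))
    (fun _ _ => ha.add haω) fun k i s hk => ?_
  rw [norm_iteratedFDeriv_eq_norm_iteratedDeriv, Real.norm_eq_abs]
  calc _ ≤ |a i| * |ω i| ^ k := abs_iteratedDeriv_mul_cos_le _ _ _ _
    _ ≤ |a i| * (1 + |ω i| ^ n) := by
      gcongr
      exact pow_le_one_add_pow (abs_nonneg _) (by exact_mod_cast hk)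
    _ = _ := by ring

lemma tsum_mul_cos_mul_cos (ha : Summable fun i => |a i|) (θ x : ℝ) :
    ∑' i, a i * cos (ω i * θ) * cos (ω i * x)
      = cosSeries (fun i => a i / 2) ω (θ + x) + cosSeries (fun i => a i / 2) ω (θ - x) := by
  have ha2 : Summable fun i => |a i / 2| := by simpa [abs_div] using ha.div_const 2
  rw [cosSeries, cosSeries, ← (summable_mul_cos ha2 _).tsum_add (summable_mul_cos ha2 _)]
  refine tsum_congr fun i => ?_
  rw [mul_add, mul_sub, cos_add, cos_sub]
  ring

end CosSeries

lemma dAlembert_deriv_deriv_eq {ψ : ℝ → ℝ} (hψ : ContDiff ℝ 2 ψ) (θ x : ℝ) :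
    deriv (deriv fun x' => ψ (θ + x') + ψ (θ - x')) x
      = deriv (deriv fun θ' => ψ (θ' + x) + ψ (θ' - x)) θ := by
  have h1 : Differentiable ℝ ψ := hψ.differentiable two_ne_zero
  have h2 : Differentiable ℝ (deriv ψ) :=
    (contDiff_succ_iff_deriv (n := 1).mp hψ).2.2.differentiable one_ne_zero
  have hx : deriv (fun x' => ψ (θ + x') + ψ (θ - x'))
      = fun x' => deriv ψ (θ + x') - deriv ψ (θ - x') := funext fun x' =>
    (((h1 _).hasDerivAt.comp_const_add θ x').add ((h1 _).hasDerivAt.comp_const_sub θ x')).deriv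
  have hθ : deriv (fun θ' => ψ (θ' + x) + ψ (θ' - x))
      = fun θ' => deriv ψ (θ' + x) + deriv ψ (θ' - x) := funext fun θ' =>
    (((h1 _).hasDerivAt.comp_add_const θ' x).add ((h1 _).hasDerivAt.comp_sub_const θ' x)).deriv
  rw [hx, hθ, (((h2 _).hasDerivAt.comp_const_add θ x).fun_sub
      ((h2 _).hasDerivAt.comp_const_sub θ x)).deriv,
    (((h2 _).hasDerivAt.comp_add_const θ x).fun_add ((h2 _).hasDerivAt.comp_sub_const θ x)).deriv]
  ring_nf

lemma deriv_deriv_comp_cos {g : ℝ → ℝ} {θ : ℝ}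
    (hg : ∀ᶠ y in 𝓝 (cos θ), DifferentiableAt ℝ g y)
    (hg' : DifferentiableAt ℝ (deriv g) (cos θ)) :
    deriv (deriv fun t => g (cos t)) θ
      = sin θ ^ 2 * deriv (deriv g) (cos θ) - cos θ * deriv g (cos θ) := by
  have hfirst : deriv (fun t => g (cos t)) =ᶠ[𝓝 θ] fun t => deriv g (cos t) * -sin t := by
    filter_upwards [continuous_cos.continuousAt.eventually hg] with t ht
    exact (ht.hasDerivAt.comp t (hasDerivAt_cos t)).deriv
  have hsecond : HasDerivAt (fun t => deriv g (cos t) * -sin t)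
      (deriv (deriv g) (cos θ) * -sin θ * -sin θ + deriv g (cos θ) * -cos θ) θ :=
    (hg'.hasDerivAt.comp θ (hasDerivAt_cos θ)).mul (hasDerivAt_sin θ).neg
  rw [hfirst.deriv_eq, hsecond.deriv]
  ring

theorem stmt_9_general (T : ℕ → ℝ → ℝ)
    (hTcos : ∀ (l : ℕ) (θ : ℝ), T l (Real.cos θ) = Real.cos (l * θ))
    (I : Set ℕ)
    (c : ℕ → ℝ) (hsum : Summable fun l : I => |c l|)
    (hsum2 : Summable fun l : I => |c l| * (l : ℝ)^2)
    (Λ : ℝ → ℝ → ℝ)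
    (hΛ : ∀ y x : ℝ, Λ y x = 1 + ∑' l : I, c l * T l y * Real.cos (l * x)) :
    ContDiffOn ℝ 2 (fun q : ℝ × ℝ => Λ q.1 q.2) (Set.Ioo (-1:ℝ) 1 ×ˢ Set.univ)
    ∧ ∀ y ∈ Set.Ioo (-1:ℝ) 1, ∀ x : ℝ,
        (1/2) * deriv (fun x' => deriv (fun x'' => Λ y x'') x') x
          = (1/2) * (-y * deriv (fun y' => Λ y' x) y
              + (1 - y^2) * deriv (fun y' => deriv (fun y'' => Λ y'' x) y') y) := by
  set ψ : ℝ → ℝ := fun s => 1 / 2 + cosSeries (fun l : I => c l / 2) (fun l => (l : ℝ)) s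
  have hψ : ContDiff ℝ 2 ψ := contDiff_const.add <| contDiff_cosSeries 2
    (by simpa [abs_div] using hsum.div_const 2)
    (by simpa [abs_div, div_mul_eq_mul_div, sq_abs] using hsum2.div_const 2)
  have hΛψ : ∀ θ x, Λ (cos θ) x = ψ (θ + x) + ψ (θ - x) := fun θ x => by
    simp only [ψ, hΛ, hTcos, tsum_mul_cos_mul_cos hsum]
    ring
  have hsmooth : ContDiffOn ℝ 2 (fun q : ℝ × ℝ => Λ q.1 q.2) (Set.Ioo (-1:ℝ) 1 ×ˢ Set.univ) := by
    have harccos : ContDiffOn ℝ 2 (fun q : ℝ × ℝ => arccos q.1) (Set.Ioo (-1:ℝ) 1 ×ˢ Set.univ) :=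
      contDiffOn_arccos.comp contDiff_fst.contDiffOn fun q hq =>
        by simpa [not_or] using ⟨hq.1.1.ne', hq.1.2.ne⟩
    refine ((hψ.comp_contDiffOn (harccos.add contDiff_snd.contDiffOn)).add
      (hψ.comp_contDiffOn (harccos.sub contDiff_snd.contDiffOn))).congr fun q hq => ?_
    simp only [Function.comp_apply]
    rw [← hΛψ, cos_arccos hq.1.1.le hq.1.2.le]
  refine ⟨hsmooth, fun y hy x => ?_⟩
  have hg : ContDiffOn ℝ 2 (fun y' => Λ y' x) (Set.Ioo (-1) 1) :=
    hsmooth.comp (contDiff_id.prodMk contDiff_const).contDiffOn fun y' hy' => ⟨hy', trivial⟩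
  obtain ⟨hg₁, -, hg₂⟩ := (contDiffOn_succ_iff_deriv_of_isOpen isOpen_Ioo (n := 1)).mp hg
  obtain ⟨θ, rfl⟩ : ∃ θ, cos θ = y := ⟨arccos y, cos_arccos hy.1.le hy.2.le⟩
  have hcos := deriv_deriv_comp_cos (g := fun y' => Λ y' x)
    (eventually_of_mem (isOpen_Ioo.mem_nhds hy) fun y' hy' =>
      hg₁.differentiableAt (isOpen_Ioo.mem_nhds hy'))
    ((hg₂.differentiableOn one_ne_zero).differentiableAt (isOpen_Ioo.mem_nhds hy))
  have hΛx : (fun x' => Λ (cos θ) x') = fun x' => ψ (θ + x') + ψ (θ - x') :=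
    funext (hΛψ θ)
  have hΛθ : (fun θ' => ψ (θ' + x) + ψ (θ' - x)) = fun θ' => Λ (cos θ') x :=
    funext fun θ' => (hΛψ θ' x).symm
  rw [hΛx, dAlembert_deriv_deriv_eq hψ, hΛθ, hcos, sin_sq]
  ring

/-- Under the additional condition `∑ |c_l| l² < ∞`, the kernel
`Λ(y,x) = 1 + ∑ c_l T_l(y) cos(lx)` is twice continuously differentiable and satisfies
`(1/2) ∂ₓₓΛ = (1/2)(-y ∂ᵧΛ + (1-y²) ∂ᵧᵧΛ)` on `(-1,1) × ℝ`. -/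
theorem stmt_9 (T : ℕ → ℝ → ℝ)
    (hTcos : ∀ (l : ℕ) (θ : ℝ), T l (Real.cos θ) = Real.cos (l * θ))
    (hTode : ∀ l : ℕ, ∀ y ∈ Set.Icc (-1:ℝ) 1,
      -y * deriv (T l) y + (1 - y^2) * deriv (deriv (T l)) y = -(l:ℝ)^2 * T l y)
    (hTbd : ∀ l : ℕ, ∀ y ∈ Set.Icc (-1:ℝ) 1, |T l y| ≤ 1)
    (I : Set ℕ) (hI : I.Countable) (hI0 : 0 ∉ I)
    (c : ℕ → ℝ) (hsum : Summable fun l : I => |c l|)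
    (hc1 : (∑' l : I, |c l|) ≤ 1)
    (hsum2 : Summable fun l : I => |c l| * (l : ℝ)^2)
    (Λ : ℝ → ℝ → ℝ)
    (hΛ : ∀ y x : ℝ, Λ y x = 1 + ∑' l : I, c l * T l y * Real.cos (l * x)) :
    ContDiffOn ℝ 2 (fun q : ℝ × ℝ => Λ q.1 q.2) (Set.Ioo (-1:ℝ) 1 ×ˢ Set.univ)
    ∧ ∀ y ∈ Set.Ioo (-1:ℝ) 1, ∀ x : ℝ,
        (1/2) * deriv (fun x' => deriv (fun x'' => Λ y x'') x') x
          = (1/2) * (-y * deriv (fun y' => Λ y' x) y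
              + (1 - y^2) * deriv (fun y' => deriv (fun y'' => Λ y'' x) y') y) :=
  stmt_9_general T hTcos I c hsum hsum2 Λ hΛ
end

section
/- Fix N ≥ 2 and 1 ≤ M < N. The Dixon–Anderson kernel Λ(y,x) = M! · ∏_{1≤i<m≤M}(x_m − x_i) · ∏_{1≤j<n≤M+1}(y_n − y_j)^{−1}, defined for y₁ < y₂ < … < y_{M+1} and x in the polytope D(y) = {x : y_i ≤ x_i ≤ y_{i+1} for i = 1,…,M}, is a probability density on D(y) for each fixed y: it is nonnegative on D(y) and ∫_{D(y)} Λ(y,x) dx = 1. -/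
/-!
Write `∏_{i<j} (x_j - x_i)` as the Vandermonde determinant `det (x_j ^ i)`. Entry `(i, j)` depends
on `x` only through `x_j`, so expanding the determinant and applying Fubini on the box `D(y)`
integrates it entrywise, giving the determinant of the moments
`∫_{y_j}^{y_{j+1}} t^i dt = (y_{j+1}^{i+1} - y_j^{i+1}) / (i+1)`. The factors `1/(i+1)` give
`1/M!`, and what remains is the Vandermonde determinant of `y` with each row replaced by its
difference with the previous one.
-/

open Real MeasureTheory Matrix

theorem prod_filter_lt_sub_eq_det_vandermonde {R : Type*} [CommRing R] {n : ℕ} (v : Fin n → R) :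
    ∏ p ∈ Finset.univ.filter (fun p : Fin n × Fin n => p.1 < p.2), (v p.2 - v p.1)
      = (vandermonde v).det := by
  rw [det_vandermonde, Finset.prod_filter, Fintype.prod_prod_type]
  simp only [← Finset.prod_filter, Finset.filter_lt_eq_Ioi]

theorem det_vandermonde_nonneg {R : Type*} [CommRing R] [PartialOrder R] [IsOrderedRing R]
    {n : ℕ} {v : Fin n → R} (hv : Monotone v) :
    0 ≤ (vandermonde v).det := by
  rw [det_vandermonde]
  exact Finset.prod_nonneg fun i _ => Finset.prod_nonneg fun j hj =>
    sub_nonneg.2 (hv (Finset.mem_Ioi.1 hj).le)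

theorem monotone_of_mem_univ_pi_Icc {α : Type*} [Preorder α] {m : ℕ} {y : Fin (m+1) → α}
    (hy : Monotone y) {x : Fin m → α}
    (hx : x ∈ Set.univ.pi fun i => Set.Icc (y i.castSucc) (y i.succ)) : Monotone x := by
  intro i j hij
  rcases hij.lt_or_eq with hij | rfl
  · calc x i ≤ y i.succ := (hx i trivial).2
      _ ≤ y j.castSucc := hy (Fin.succ_le_castSucc_iff.2 hij)
      _ ≤ x j := (hx j trivial).1
  · rfl

theorem det_of_pow_succ_sub_eq_det_vandermonde {R : Type*} [CommRing R] {m : ℕ}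
    (y : Fin (m+1) → R) :
    (of fun i j : Fin m => y i.succ ^ ((j : ℕ) + 1) - y i.castSucc ^ ((j : ℕ) + 1)).det
      = (vandermonde y).det := by
  let C : Matrix (Fin (m+1)) (Fin (m+1)) R := of fun i j =>
    Fin.cases (y 0 ^ (j : ℕ)) (fun i : Fin m => y i.succ ^ (j : ℕ) - y i.castSucc ^ (j : ℕ)) i
  have hC : (vandermonde y).det = C.det := by
    refine det_eq_of_forall_row_eq_smul_add_pred (fun _ => 1) (fun j => rfl) fun i j => ?_
    simp only [C, of_apply, Fin.cases_succ, vandermonde_apply, one_mul]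
    ring
  rw [hC, det_succ_column_zero, Finset.sum_eq_single 0]
  · simp only [C, Fin.val_zero, pow_zero, Fin.cases_zero, of_apply, one_mul]
    congr 1
  · intro i _ hi
    obtain ⟨i, rfl⟩ := Fin.exists_succ_eq.2 hi
    simp [C]
  · simp

theorem integral_det_eq_det_integral_pi {𝕜 ι E : Type*} [RCLike 𝕜] [Fintype ι]
    [DecidableEq ι] [MeasurableSpace E] {μ : ι → Measure E} [∀ i, SigmaFinite (μ i)] {f : ι → E → 𝕜}
    (hf : ∀ i j, Integrable (f i) (μ j)) :
    ∫ x, (of fun i j => f i (x j)).det ∂(Measure.pi μ) = (of fun i j => ∫ t, f i t ∂(μ j)).det := by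
  have hterm : ∀ σ : Equiv.Perm ι,
      Integrable (fun x : ι → E => ∏ i, f (σ i) (x i)) (Measure.pi μ) :=
    fun σ => Integrable.fintype_prod fun i => hf (σ i) i
  simp only [det_apply', of_apply]
  rw [integral_finsetSum _ fun σ _ => (hterm σ).const_mul _]
  simp only [integral_const_mul, integral_fintype_prod_eq_prod]

theorem integral_Icc_pow {a b : ℝ} (hab : a ≤ b) (n : ℕ) :
    ∫ t in Set.Icc a b, t ^ n = (n + 1 : ℝ)⁻¹ * (b ^ (n + 1) - a ^ (n + 1)) := by
  rw [integral_Icc_eq_integral_Ioc, ← intervalIntegral.integral_of_le hab, integral_pow,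
    div_eq_inv_mul]

theorem integral_det_vandermonde_interlacing {m : ℕ} {y : Fin (m+1) → ℝ} (hy : Monotone y) :
    ∫ x in Set.univ.pi (fun i : Fin m => Set.Icc (y i.castSucc) (y i.succ)), (vandermonde x).det
      = (vandermonde y).det / m.factorial := by
  have hmoments : (of fun i j : Fin m => ∫ t in Set.Icc (y j.castSucc) (y j.succ), t ^ (i : ℕ))
      = of fun i j : Fin m =>
          ((i : ℕ) + 1 : ℝ)⁻¹ * (y j.succ ^ ((i : ℕ) + 1) - y j.castSucc ^ ((i : ℕ) + 1)) := by
    ext i j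
    exact integral_Icc_pow (hy j.castSucc_le_succ) i
  have hfactorial : ∏ i : Fin m, ((i : ℕ) + 1 : ℝ)⁻¹ = (m.factorial : ℝ)⁻¹ := by
    rw [Finset.prod_inv_distrib, Fin.prod_univ_eq_prod_range (fun i => (i + 1 : ℝ))]
    exact_mod_cast congrArg (fun k : ℕ => (k : ℝ)⁻¹) (Finset.prod_range_add_one_eq_factorial m)
  rw [volume_pi, Measure.restrict_pi_pi]
  calc _ = ∫ x, (of fun i j : Fin m => x j ^ (i : ℕ)).det
          ∂Measure.pi fun i => volume.restrict (Set.Icc (y i.castSucc) (y i.succ)) := by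
        congr 1
        funext x
        exact (det_transpose _).symm
    _ = _ := by
      rw [integral_det_eq_det_integral_pi (f := fun (i : Fin m) (t : ℝ) => t ^ (i : ℕ))
          fun i j => (continuous_pow _).integrableOn_Icc,
        hmoments, det_mul_column (fun i : Fin m => ((i : ℕ) + 1 : ℝ)⁻¹)
          (fun i j => y j.succ ^ ((i : ℕ) + 1) - y j.castSucc ^ ((i : ℕ) + 1)),
        hfactorial, inv_mul_eq_div, ← det_of_pow_succ_sub_eq_det_vandermonde, ← det_transpose]
      rfl

theorem stmt_12_general (M : ℕ)
    (y : Fin (M+1) → ℝ) (hy : StrictMono y)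
    (Λ : (Fin M → ℝ) → ℝ)
    (hΛ : ∀ x : Fin M → ℝ, Λ x = (M.factorial : ℝ)
      * (∏ p ∈ Finset.univ.filter (fun p : Fin M × Fin M => p.1 < p.2),
          (x p.2 - x p.1))
      * (∏ p ∈ Finset.univ.filter (fun p : Fin (M+1) × Fin (M+1) => p.1 < p.2),
          (y p.2 - y p.1))⁻¹)
    (D : Set (Fin M → ℝ))
    (hD : D = Set.univ.pi fun i : Fin M => Set.Icc (y i.castSucc) (y i.succ)) :
    (∀ x ∈ D, 0 ≤ Λ x) ∧ ∫ x in D, Λ x = 1 := by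
  simp only [prod_filter_lt_sub_eq_det_vandermonde] at hΛ
  have hVy : (vandermonde y).det ≠ 0 := det_vandermonde_ne_zero_iff.2 hy.injective
  subst hD
  refine ⟨fun x hx => ?_, ?_⟩
  · rw [hΛ]
    have hVx_nonneg := det_vandermonde_nonneg (monotone_of_mem_univ_pi_Icc hy.monotone hx)
    have hVy_nonneg := det_vandermonde_nonneg hy.monotone
    positivity
  · have hΛ' : Λ = fun x => (M.factorial * ((vandermonde y).det)⁻¹) * (vandermonde x).det :=
      funext fun x => by rw [hΛ]; ring
    rw [hΛ', integral_const_mul, integral_det_vandermonde_interlacing hy.monotone]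
    field_simp

/-- The Dixon–Anderson kernel is a probability density on the interlacing polytope
`D(y) = [y₁,y₂] × ⋯ × [y_M, y_{M+1}]` for each strictly increasing `y`. -/
theorem stmt_12 (N M : ℕ) (hN : 2 ≤ N) (hM : 1 ≤ M) (hMN : M < N)
    (y : Fin (M+1) → ℝ) (hy : StrictMono y)
    (Λ : (Fin M → ℝ) → ℝ)
    (hΛ : ∀ x : Fin M → ℝ, Λ x = (M.factorial : ℝ)
      * (∏ p ∈ Finset.univ.filter (fun p : Fin M × Fin M => p.1 < p.2),
          (x p.2 - x p.1))
      * (∏ p ∈ Finset.univ.filter (fun p : Fin (M+1) × Fin (M+1) => p.1 < p.2),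
          (y p.2 - y p.1))⁻¹)
    (D : Set (Fin M → ℝ))
    (hD : D = Set.univ.pi fun i : Fin M => Set.Icc (y i.castSucc) (y i.succ)) :
    (∀ x ∈ D, 0 ≤ Λ x) ∧ ∫ x in D, Λ x = 1 :=
  stmt_12_general M y hy Λ hΛ D hD
end

section
/- The Dixon–Anderson kernel Λ(y,x) = M! ∏_{1≤i<m≤M}(x_m−x_i) ∏_{1≤j<n≤M+1}(y_n−y_j)^{−1} satisfies, pointwise on the open set {y₁<…<y_{M+1}, y_i < x_i < y_{i+1}}, both (A^X)*Λ = 0 and A^Y Λ = 0, where A^X f = (1/2)Δₓf + ∑_{i=1}^M (∑_{i'≠i} 1/(x_i−x_{i'})) ∂_{x_i}f is the generator of an M-dimensional Dyson Brownian motion (with (A^X)* its formal adjoint), and A^Y g = (1/2)Δ_y g + ∑_{j=1}^{M+1} (∑_{j'≠j} 1/(y_j−y_{j'})) ∂_{y_j}g is the generator of an (M+1)-dimensional Dyson Brownian motion. -/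
/-!
Along the `i`-th coordinate line the Vandermonde product `V` is `C * ∏_{j ≠ i} (s - z j)`, so
its logarithmic derivative in `z i` is the Coulomb drift `S i = ∑_{j ≠ i} (z i - z j)⁻¹`, and
`∂ᵢ² V = V (S i ^ 2 - T i)`, `∂ᵢ² V⁻¹ = V⁻¹ (S i ^ 2 + T i)` with `T i = ∑_{j ≠ i} (z i - z j)⁻²`.
Summing the cyclic identity `1/((a-b)(a-c)) + 1/((b-c)(b-a)) + 1/((c-a)(c-b)) = 0` over triples
gives `∑ S i ^ 2 = ∑ T i`, i.e. `V` is harmonic. As the drift times `V` is `∂ᵢ V`, the adjoint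
equation reads `-(1/2) Δ V = 0`, and the `y` equation reads `V⁻¹ (∑ T - ∑ S ^ 2) / 2 = 0`.
-/

open Real MeasureTheory

/-- Partial derivative of a function on `Fin n → ℝ` in the `i`-th coordinate. -/
noncomputable def pd {n : ℕ} (i : Fin n) (F : (Fin n → ℝ) → ℝ) : (Fin n → ℝ) → ℝ :=
  fun x => deriv (fun s => F (Function.update x i s)) (x i)

open Finset Filter Topology Function

section LineCalculus

variable {ι : Type*} (a : ι → ℝ) (t : Finset ι) {s : ℝ}

theorem hasDerivAt_prod_sub [DecidableEq ι] (hs : ∀ j ∈ t, s ≠ a j) :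
    HasDerivAt (fun u => ∏ j ∈ t, (u - a j))
      ((∏ j ∈ t, (s - a j)) * ∑ j ∈ t, (s - a j)⁻¹) s := by
  refine (HasDerivAt.fun_finsetProd fun j (_ : j ∈ t) =>
    (hasDerivAt_id s).sub_const (a j)).congr_deriv ?_
  rw [mul_sum]
  refine sum_congr rfl fun j hj => ?_
  have hj' : s - a j ≠ 0 := sub_ne_zero.2 (hs j hj)
  rw [← mul_prod_erase t _ hj, smul_eq_mul, mul_one, mul_comm (s - a j), mul_assoc,
    mul_inv_cancel₀ hj', mul_one, id]

theorem hasDerivAt_sum_inv_sub (hs : ∀ j ∈ t, s ≠ a j) :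
    HasDerivAt (fun u => ∑ j ∈ t, (u - a j)⁻¹) (-∑ j ∈ t, ((s - a j) ^ 2)⁻¹) s := by
  rw [← sum_neg_distrib]
  refine HasDerivAt.fun_sum fun j hj => ?_
  refine (((hasDerivAt_id s).sub_const (a j)).inv (sub_ne_zero.2 (hs j hj))).congr_deriv ?_
  simp only [id, neg_div, one_div]

end LineCalculus

theorem deriv_deriv_eq_of_hasDerivAt_mul {f ℓ : ℝ → ℝ} {ℓ' s : ℝ}
    (hf : ∀ᶠ u in 𝓝 s, HasDerivAt f (f u * ℓ u) u) (hℓ : HasDerivAt ℓ ℓ' s) :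
    deriv (deriv f) s = f s * (ℓ s ^ 2 + ℓ') := by
  have hderiv : deriv f =ᶠ[𝓝 s] fun u => f u * ℓ u := hf.mono fun u hu => hu.deriv
  rw [hderiv.deriv_eq, (hf.self_of_nhds.fun_mul hℓ).deriv]
  ring

theorem cyclic_sum_inv_sub_mul_inv_sub_eq_zero {a b c : ℝ} (hab : a ≠ b) (hbc : b ≠ c)
    (hac : a ≠ c) :
    (a - b)⁻¹ * (a - c)⁻¹ + (b - c)⁻¹ * (b - a)⁻¹ + (c - a)⁻¹ * (c - b)⁻¹ = 0 := by
  have h1 : a - b ≠ 0 := sub_ne_zero.2 hab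
  have h2 : b - c ≠ 0 := sub_ne_zero.2 hbc
  have h3 : a - c ≠ 0 := sub_ne_zero.2 hac
  field_simp
  ring

theorem cyclic_sum_inv_sub_mul_inv_sub {ι : Type*} [DecidableEq ι] {z : ι → ℝ}
    (hz : Injective z) (i j k : ι) :
    (z i - z j)⁻¹ * (z i - z k)⁻¹ + (z j - z k)⁻¹ * (z j - z i)⁻¹
        + (z k - z i)⁻¹ * (z k - z j)⁻¹
      = (if j = k then ((z i - z j)⁻¹) ^ 2 else 0) + (if k = i then ((z j - z k)⁻¹) ^ 2 else 0)
        + (if i = j then ((z k - z i)⁻¹) ^ 2 else 0) := by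
  split_ifs with hjk hki hij <;> subst_vars <;> simp [sq]
  rename_i hki hij
  exact cyclic_sum_inv_sub_mul_inv_sub_eq_zero (hz.ne hij) (hz.ne hjk) (hz.ne (Ne.symm hki))

theorem sum_sq_sum_inv_sub {ι : Type*} [Fintype ι] [DecidableEq ι] {z : ι → ℝ}
    (hz : Injective z) :
    ∑ i, (∑ j ∈ univ.erase i, (z i - z j)⁻¹) ^ 2
      = ∑ i, ∑ j ∈ univ.erase i, ((z i - z j) ^ 2)⁻¹ := by
  simp only [← inv_pow]
  -- As `(z i - z i)⁻¹ = 0`, all sums may run over every index, including coinciding ones.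
  have hS : ∀ i, ∑ j ∈ univ.erase i, (z i - z j)⁻¹ = ∑ j, (z i - z j)⁻¹ :=
    fun i => sum_erase _ (by simp)
  have hT : ∀ i, ∑ j ∈ univ.erase i, ((z i - z j)⁻¹) ^ 2 = ∑ j, ((z i - z j)⁻¹) ^ 2 :=
    fun i => sum_erase _ (by simp)
  simp only [hS, hT, sq (∑ j, _), sum_mul_sum]
  set E : ι → ι → ι → ℝ := fun i j k => (z i - z j)⁻¹ * (z i - z k)⁻¹ with hE
  have hrot₁ : ∑ i, ∑ j, ∑ k, E j k i = ∑ i, ∑ j, ∑ k, E i j k := by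
    rw [sum_comm]; exact sum_congr rfl fun _ _ => sum_comm
  have hrot₂ : ∑ i, ∑ j, ∑ k, E k i j = ∑ i, ∑ j, ∑ k, E i j k :=
    (sum_congr rfl fun _ _ => sum_comm).trans sum_comm
  have hcyc : ∑ i, ∑ j, ∑ k, (E i j k + E j k i + E k i j)
      = 3 * ∑ i, ∑ j, ((z i - z j)⁻¹) ^ 2 := by
    simp only [hE, cyclic_sum_inv_sub_mul_inv_sub hz, sum_add_distrib, sum_ite_eq, mem_univ,
      if_true, sum_ite_eq', sum_ite_irrel, sum_const_zero]
    rw [sum_comm (f := fun i j => ((z j - z i)⁻¹) ^ 2)]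
    ring
  simp only [sum_add_distrib, hrot₁, hrot₂] at hcyc
  linarith

theorem prod_prod_eq_mul_prod_erase {ι M : Type*} [Fintype ι] [DecidableEq ι] [CommMonoid M]
    (g : ι → ι → M) (i : ι) :
    ∏ a, ∏ b, g a b
      = g i i * (∏ b ∈ univ.erase i, g i b * g b i)
          * ∏ a ∈ univ.erase i, ∏ b ∈ univ.erase i, g a b := by
  have hsplit : ∀ a, ∏ b, g a b = g a i * ∏ b ∈ univ.erase i, g a b :=
    fun a => (mul_prod_erase _ _ (mem_univ i)).symm
  rw [← mul_prod_erase univ _ (mem_univ i)]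
  simp only [hsplit, prod_mul_distrib]
  ac_rfl

section Vandermonde

variable {ι : Type*} [Fintype ι] [LinearOrder ι]

noncomputable def vandermondeProd (z : ι → ℝ) : ℝ :=
  ∏ p ∈ univ.filter (fun p : ι × ι => p.1 < p.2), (z p.2 - z p.1)

theorem vandermondeProd_eq_prod_prod (z : ι → ℝ) :
    vandermondeProd z = ∏ a, ∏ b, if a < b then z b - z a else 1 := by
  rw [vandermondeProd, prod_filter, Fintype.prod_prod_type]

theorem vandermondeProd_ne_zero {z : ι → ℝ} (hz : Injective z) : vandermondeProd z ≠ 0 :=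
  prod_ne_zero_iff.2 fun _ hp => sub_ne_zero.2 fun h => (mem_filter.1 hp).2.ne (hz h).symm

theorem exists_vandermondeProd_update_eq (z : ι → ℝ) (i : ι) :
    ∃ C : ℝ, ∀ s, vandermondeProd (update z i s) = C * ∏ j ∈ univ.erase i, (s - z j) := by
  refine ⟨(∏ j ∈ univ.erase i, if i < j then -1 else 1) *
    ∏ a ∈ univ.erase i, ∏ b ∈ univ.erase i, if a < b then z b - z a else 1, fun s => ?_⟩
  have hpair : ∀ j ∈ univ.erase i,
      (if i < j then update z i s j - update z i s i else 1)
        * (if j < i then update z i s i - update z i s j else 1)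
      = (if i < j then -1 else 1) * (s - z j) := by
    intro j hj
    rw [update_self, update_of_ne (ne_of_mem_erase hj)]
    rcases lt_trichotomy i j with h | h | h
    · simp [h, h.not_gt]
    · exact absurd h.symm (ne_of_mem_erase hj)
    · simp [h, h.not_gt]
  have hrest : ∀ a ∈ univ.erase i, ∀ b ∈ univ.erase i,
      (if a < b then update z i s b - update z i s a else 1)
        = if a < b then z b - z a else 1 := by
    intro a ha b hb
    rw [update_of_ne (ne_of_mem_erase ha), update_of_ne (ne_of_mem_erase hb)]
  rw [vandermondeProd_eq_prod_prod, prod_prod_eq_mul_prod_erase _ i, if_neg (lt_irrefl i),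
    prod_congr rfl hpair, prod_mul_distrib,
    prod_congr rfl fun a ha => prod_congr rfl (hrest a ha)]
  ring

theorem hasDerivAt_vandermondeProd_update {z : ι → ℝ} {i : ι} {s : ℝ}
    (hs : ∀ j ∈ univ.erase i, s ≠ z j) :
    HasDerivAt (fun u => vandermondeProd (update z i u))
      (vandermondeProd (update z i s) * ∑ j ∈ univ.erase i, (s - z j)⁻¹) s := by
  obtain ⟨C, hC⟩ := exists_vandermondeProd_update_eq z i
  simp only [hC]
  exact ((hasDerivAt_prod_sub z _ hs).const_mul C).congr_deriv (mul_assoc _ _ _).symm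

theorem eventually_forall_ne_of_injective {z : ι → ℝ} (hz : Injective z) (i : ι) :
    ∀ᶠ u in 𝓝 (z i), ∀ j ∈ univ.erase i, u ≠ z j :=
  (eventually_all_finset _).2 fun _ hj => eventually_ne_nhds (hz.ne (ne_of_mem_erase hj).symm)

variable {z : ι → ℝ} (hz : Injective z) (c : ℝ) (i : ι)
include hz

theorem eventually_hasDerivAt_const_mul_vandermondeProd_update :
    ∀ᶠ u in 𝓝 (z i), HasDerivAt (fun s => c * vandermondeProd (update z i s))
      (c * vandermondeProd (update z i u) * ∑ j ∈ univ.erase i, (u - z j)⁻¹) u :=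
  (eventually_forall_ne_of_injective hz i).mono fun _ hu =>
    ((hasDerivAt_vandermondeProd_update hu).const_mul c).congr_deriv (mul_assoc _ _ _).symm

theorem eventually_hasDerivAt_const_mul_inv_vandermondeProd_update :
    ∀ᶠ u in 𝓝 (z i), HasDerivAt (fun s => c * (vandermondeProd (update z i s))⁻¹)
      (c * (vandermondeProd (update z i u))⁻¹ * -∑ j ∈ univ.erase i, (u - z j)⁻¹) u := by
  have hV : ∀ᶠ u in 𝓝 (z i), vandermondeProd (update z i u) ≠ 0 := by
    have h₀ := hasDerivAt_vandermondeProd_update (eventually_forall_ne_of_injective hz i).self_of_nhds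
    refine h₀.continuousAt.eventually_ne ?_
    rw [update_eq_self]
    exact vandermondeProd_ne_zero hz
  filter_upwards [eventually_forall_ne_of_injective hz i, hV] with u hu hVu
  refine (((hasDerivAt_vandermondeProd_update hu).inv hVu).const_mul c).congr_deriv ?_
  field_simp

end Vandermonde

section PartialDerivative

variable {n : ℕ} {F G : (Fin n → ℝ) → ℝ} {z : Fin n → ℝ} {i : Fin n}

theorem pd_update_self (s : ℝ) :
    pd i F (update z i s) = deriv (fun u => F (update z i u)) s := by
  simp only [pd, update_self, update_idem]

theorem pd_pd_apply : pd i (pd i F) z = deriv (deriv fun s => F (update z i s)) (z i) := by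
  simp only [pd, update_self, update_idem]

theorem pd_congr (h : (fun s => F (update z i s)) =ᶠ[𝓝 (z i)] fun s => G (update z i s)) :
    pd i F z = pd i G z :=
  h.deriv_eq

theorem pd_pd_eq_of_eventually_hasDerivAt_mul {ℓ : ℝ → ℝ} {ℓ' : ℝ}
    (hF : ∀ᶠ u in 𝓝 (z i), HasDerivAt (fun s => F (update z i s)) (F (update z i u) * ℓ u) u)
    (hℓ : HasDerivAt ℓ ℓ' (z i)) :
    pd i (pd i F) z = F z * (ℓ (z i) ^ 2 + ℓ') := by
  rw [pd_pd_apply, deriv_deriv_eq_of_hasDerivAt_mul hF hℓ, update_eq_self]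

end PartialDerivative

section DysonGenerators

variable {n : ℕ} {z : Fin n → ℝ} (hz : Injective z) (c : ℝ) (i : Fin n)
include hz

theorem pd_pd_const_mul_vandermondeProd :
    pd i (pd i fun w => c * vandermondeProd w) z
      = c * vandermondeProd z * ((∑ j ∈ univ.erase i, (z i - z j)⁻¹) ^ 2
          - ∑ j ∈ univ.erase i, ((z i - z j) ^ 2)⁻¹) := by
  rw [pd_pd_eq_of_eventually_hasDerivAt_mul
    (eventually_hasDerivAt_const_mul_vandermondeProd_update hz c i)
    (hasDerivAt_sum_inv_sub z _ (eventually_forall_ne_of_injective hz i).self_of_nhds)]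
  ring

theorem sum_pd_pd_const_mul_vandermondeProd :
    ∑ i, pd i (pd i fun w => c * vandermondeProd w) z = 0 := by
  simp only [pd_pd_const_mul_vandermondeProd hz, ← mul_sum, sum_sub_distrib,
    sum_sq_sum_inv_sub hz, sub_self, mul_zero]

theorem pd_drift_mul_vandermondeProd :
    pd i (fun w => (∑ j ∈ univ \ {i}, 1 / (w i - w j)) * (c * vandermondeProd w)) z
      = pd i (pd i fun w => c * vandermondeProd w) z := by
  refine pd_congr ?_
  filter_upwards [eventually_hasDerivAt_const_mul_vandermondeProd_update hz c i] with u hu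
  rw [pd_update_self, hu.deriv, sdiff_singleton_eq_erase, update_self, mul_comm]
  refine congrArg _ (sum_congr rfl fun j hj => ?_)
  rw [update_of_ne (ne_of_mem_erase hj), one_div]

theorem pd_const_mul_inv_vandermondeProd :
    pd i (fun w => c * (vandermondeProd w)⁻¹) z
      = -(c * (vandermondeProd z)⁻¹ * ∑ j ∈ univ.erase i, (z i - z j)⁻¹) := by
  have h := (eventually_hasDerivAt_const_mul_inv_vandermondeProd_update hz c i).self_of_nhds
  rw [update_eq_self, mul_neg] at h
  exact h.deriv

theorem pd_pd_const_mul_inv_vandermondeProd :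
    pd i (pd i fun w => c * (vandermondeProd w)⁻¹) z
      = c * (vandermondeProd z)⁻¹ * ((∑ j ∈ univ.erase i, (z i - z j)⁻¹) ^ 2
          + ∑ j ∈ univ.erase i, ((z i - z j) ^ 2)⁻¹) := by
  rw [pd_pd_eq_of_eventually_hasDerivAt_mul
    (eventually_hasDerivAt_const_mul_inv_vandermondeProd_update hz c i)
    (hasDerivAt_sum_inv_sub z _ (eventually_forall_ne_of_injective hz i).self_of_nhds).fun_neg]
  ring

end DysonGenerators

theorem strictMono_of_interlacing {M : ℕ} {y : Fin (M + 1) → ℝ} {x : Fin M → ℝ}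
    (hy : StrictMono y) (hxy : ∀ i : Fin M, y i.castSucc < x i ∧ x i < y i.succ) :
    StrictMono x := fun i i' hii' =>
  calc x i < y i.succ := (hxy i).2
    _ ≤ y i'.castSucc := hy.monotone (Fin.succ_le_castSucc_iff.2 hii')
    _ < x i' := (hxy i').1

theorem stmt_13_general (M : ℕ)
    (Λ : (Fin (M+1) → ℝ) → (Fin M → ℝ) → ℝ)
    (hΛ : ∀ (y : Fin (M+1) → ℝ) (x : Fin M → ℝ), Λ y x = (M.factorial : ℝ)
      * (∏ p ∈ Finset.univ.filter (fun p : Fin M × Fin M => p.1 < p.2),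
          (x p.2 - x p.1))
      * (∏ p ∈ Finset.univ.filter (fun p : Fin (M+1) × Fin (M+1) => p.1 < p.2),
          (y p.2 - y p.1))⁻¹)
    (bX : (Fin M → ℝ) → Fin M → ℝ)
    (hbX : ∀ (x : Fin M → ℝ) (i : Fin M),
      bX x i = ∑ i' ∈ Finset.univ \ {i}, 1 / (x i - x i'))
    (bY : (Fin (M+1) → ℝ) → Fin (M+1) → ℝ)
    (hbY : ∀ (y : Fin (M+1) → ℝ) (j : Fin (M+1)),
      bY y j = ∑ j' ∈ Finset.univ \ {j}, 1 / (y j - y j')) :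
    ∀ (y : Fin (M+1) → ℝ) (x : Fin M → ℝ), StrictMono y →
      (∀ i : Fin M, y i.castSucc < x i ∧ x i < y i.succ) →
      ((1/2) * (∑ i : Fin M, pd i (pd i (Λ y)) x)
          - (∑ i : Fin M, pd i (fun x' => bX x' i * Λ y x') x) = 0)
      ∧ ((1/2) * (∑ j : Fin (M+1), pd j (pd j (fun y' => Λ y' x)) y)
          + (∑ j : Fin (M+1), bY y j * pd j (fun y' => Λ y' x) y) = 0) := by
  intro y x hy hxy
  have hy' : Injective y := hy.injective
  have hx : Injective x := (strictMono_of_interlacing hy hxy).injective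
  have hΛx : Λ y = fun w => (M.factorial * (vandermondeProd y)⁻¹) * vandermondeProd w :=
    funext fun w => by rw [hΛ]; unfold vandermondeProd; ring
  have hΛy :
      (fun w => Λ w x) = fun w => (M.factorial * vandermondeProd x) * (vandermondeProd w)⁻¹ :=
    funext fun w => hΛ w x
  constructor
  · simp only [hbX, hΛx, pd_drift_mul_vandermondeProd hx, sum_pd_pd_const_mul_vandermondeProd hx]
    norm_num
  · simp only [hbY, hΛy, sdiff_singleton_eq_erase, one_div,
      pd_const_mul_inv_vandermondeProd hy', pd_pd_const_mul_inv_vandermondeProd hy',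
      mul_neg, sum_neg_distrib, mul_left_comm (∑ j ∈ univ.erase _, (y _ - y j)⁻¹), ← sq,
      ← mul_sum, sum_add_distrib, sum_sq_sum_inv_sub hy']
    ring

/-- The Dixon–Anderson kernel is annihilated both by the formal adjoint of the
`M`-dimensional Dyson Brownian motion generator (in `x`) and by the `(M+1)`-dimensional
Dyson Brownian motion generator (in `y`), pointwise on the open interlacing set. -/
theorem stmt_13 (M : ℕ) (hM : 1 ≤ M)
    (Λ : (Fin (M+1) → ℝ) → (Fin M → ℝ) → ℝ)
    (hΛ : ∀ (y : Fin (M+1) → ℝ) (x : Fin M → ℝ), Λ y x = (M.factorial : ℝ)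
      * (∏ p ∈ Finset.univ.filter (fun p : Fin M × Fin M => p.1 < p.2),
          (x p.2 - x p.1))
      * (∏ p ∈ Finset.univ.filter (fun p : Fin (M+1) × Fin (M+1) => p.1 < p.2),
          (y p.2 - y p.1))⁻¹)
    (bX : (Fin M → ℝ) → Fin M → ℝ)
    (hbX : ∀ (x : Fin M → ℝ) (i : Fin M),
      bX x i = ∑ i' ∈ Finset.univ \ {i}, 1 / (x i - x i'))
    (bY : (Fin (M+1) → ℝ) → Fin (M+1) → ℝ)
    (hbY : ∀ (y : Fin (M+1) → ℝ) (j : Fin (M+1)),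
      bY y j = ∑ j' ∈ Finset.univ \ {j}, 1 / (y j - y j')) :
    ∀ (y : Fin (M+1) → ℝ) (x : Fin M → ℝ), StrictMono y →
      (∀ i : Fin M, y i.castSucc < x i ∧ x i < y i.succ) →
      ((1/2) * (∑ i : Fin M, pd i (pd i (Λ y)) x)
          - (∑ i : Fin M, pd i (fun x' => bX x' i * Λ y x') x) = 0)
      ∧ ((1/2) * (∑ j : Fin (M+1), pd j (pd j (fun y' => Λ y' x)) y)
          + (∑ j : Fin (M+1), bY y j * pd j (fun y' => Λ y' x) y) = 0) :=
  stmt_13_general M Λ hΛ bX hbX bY hbY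
end

section
/- The Vandermonde determinant h(x) = ∏_{1≤i<j≤M}(x_j − x_i) on ℝᴹ is a harmonic function: Δh = 0 everywhere on ℝᴹ. -/
/-!
Write `h = det V(x)` with `V(x)` the Vandermonde matrix, whose `i`-th row `(x_i ^ k)_k`
depends on `x_i` alone. Since the determinant is linear in each row, `∂ᵢ² h` is the
determinant of `V(x)` with its `i`-th row replaced by `(V(x) D²)ᵢ`, where `D` is the matrix
of `d/ds` on polynomials of degree `< M` in the monomial basis. For any square matrices
`A`, `B`, Cramer's rule and `adj A · A = det A · 1` give
`∑ᵢ det (A with row i replaced by (A B)ᵢ) = tr B · det A`. Hence `Δh = tr (D²) · h`,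
and `tr (D²) = 0` because `D` is strictly upper triangular.
-/

open Real

open Matrix

namespace Matrix

theorem sum_det_updateRow_mul {n R : Type*} [Fintype n] [DecidableEq n] [CommRing R]
    (A B : Matrix n n R) :
    ∑ i, (A.updateRow i ((A * B) i)).det = B.trace * A.det := by
  simp_rw [← cramer_transpose_apply, cramer_eq_adjugate_mulVec, ← adjugate_transpose]
  calc ∑ i, (A.adjugateᵀ *ᵥ (A * B) i) i = (A * B * A.adjugate).trace := by
        simp [trace, mulVec, dotProduct, mul_apply, mul_comm]
    _ = B.trace * A.det := by
        rw [Matrix.mul_assoc, trace_mul_comm, Matrix.mul_assoc, adjugate_mul]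
        simp [trace_smul, mul_comm]

theorem hasDerivAt_det_updateRow {𝕜 n : Type*} [NontriviallyNormedField 𝕜]
    [CompleteSpace 𝕜] [Fintype n] [DecidableEq n] (A : Matrix n n 𝕜) (i : n)
    {r : 𝕜 → n → 𝕜} {r' : n → 𝕜} {s : 𝕜} (hr : HasDerivAt r r' s) :
    HasDerivAt (fun s => (A.updateRow i (r s)).det) (A.updateRow i r').det s := by
  simp_rw [← cramer_transpose_apply]
  exact (LinearMap.proj i ∘ₗ cramer Aᵀ).toContinuousLinearMap.hasFDerivAt.comp_hasDerivAt
    s hr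

theorem updateRow_vandermonde_update {R : Type*} [CommRing R] {n : ℕ} (x : Fin n → R)
    (i : Fin n) (s : R) (r : Fin n → R) :
    (vandermonde (Function.update x i s)).updateRow i r = (vandermonde x).updateRow i r := by
  ext a b
  by_cases ha : a = i
  · simp [ha]
  · simp [updateRow_ne ha, vandermonde_apply, Function.update_of_ne ha]

end Matrix

def monomialDerivMatrix (n : ℕ) : Matrix (Fin n) (Fin n) ℝ :=
  of fun k l => if (k : ℕ) + 1 = l then (l : ℝ) else 0

theorem trace_monomialDerivMatrix_sq (n : ℕ) :
    (monomialDerivMatrix n * monomialDerivMatrix n).trace = 0 := by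
  refine Finset.sum_eq_zero fun k _ => ?_
  rw [diag_apply, mul_apply]
  refine Finset.sum_eq_zero fun l _ => ?_
  simp only [monomialDerivMatrix, of_apply, mul_ite, ite_mul, mul_zero, zero_mul]
  split_ifs <;> first | rfl | omega

theorem hasDerivAt_monomials {n : ℕ} (s : ℝ) :
    HasDerivAt (fun s => fun k : Fin n => s ^ (k : ℕ))
      ((fun k : Fin n => s ^ (k : ℕ)) ᵥ* monomialDerivMatrix n) s := by
  refine hasDerivAt_pi.2 fun l => (hasDerivAt_pow (l : ℕ) s).congr_deriv ?_
  simp only [vecMul, dotProduct, monomialDerivMatrix, of_apply, mul_ite, mul_zero]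
  rcases l with ⟨_ | l, hl⟩
  · simp
  · rw [Finset.sum_eq_single ⟨l, by omega⟩
      (fun b _ hb => if_neg fun h => hb (Fin.ext (by simpa using h))) (by simp)]
    simp [mul_comm]

theorem hasDerivAt_monomials_vecMul {n : ℕ} (C : Matrix (Fin n) (Fin n) ℝ) (s : ℝ) :
    HasDerivAt (fun s => (fun k : Fin n => s ^ (k : ℕ)) ᵥ* C)
      ((fun k : Fin n => s ^ (k : ℕ)) ᵥ* (monomialDerivMatrix n * C)) s := by
  rw [← vecMul_vecMul]
  exact (vecMulLinear C).toContinuousLinearMap.hasFDerivAt.comp_hasDerivAt s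
    (hasDerivAt_monomials s)

theorem pd_det_vandermonde_updateRow {n : ℕ} (i : Fin n) (C : Matrix (Fin n) (Fin n) ℝ) :
    pd i (fun x => ((vandermonde x).updateRow i (vandermonde x i ᵥ* C)).det) = fun x =>
      ((vandermonde x).updateRow i (vandermonde x i ᵥ* (monomialDerivMatrix n * C))).det := by
  funext x
  have hrow (s : ℝ) : vandermonde (Function.update x i s) i = fun k : Fin n => s ^ (k : ℕ) := by
    ext k
    simp [vandermonde_apply]
  simp only [pd, updateRow_vandermonde_update, hrow]
  exact ((vandermonde x).hasDerivAt_det_updateRow i (hasDerivAt_monomials_vecMul C (x i))).deriv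

theorem laplacian_det_vandermonde {n : ℕ} (x : Fin n → ℝ) :
    ∑ i, pd i (pd i fun x => (vandermonde x).det) x = 0 := by
  set D := monomialDerivMatrix n
  calc ∑ i, pd i (pd i fun x => (vandermonde x).det) x
      = ∑ i, ((vandermonde x).updateRow i ((vandermonde x * (D * D)) i)).det := by
        refine Finset.sum_congr rfl fun i _ => ?_
        have hV : (fun x : Fin n → ℝ => (vandermonde x).det) =
            fun x => ((vandermonde x).updateRow i (vandermonde x i ᵥ* 1)).det := by
          simp only [vecMul_one, updateRow_eq_self]
        rw [hV, pd_det_vandermonde_updateRow, pd_det_vandermonde_updateRow, mul_one,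
          mul_apply_eq_vecMul]
    _ = 0 := by rw [sum_det_updateRow_mul, trace_monomialDerivMatrix_sq, zero_mul]

theorem prod_sub_of_lt_eq_det_vandermonde {R : Type*} [CommRing R] {n : ℕ} (x : Fin n → R) :
    ∏ p ∈ Finset.univ.filter (fun p : Fin n × Fin n => p.1 < p.2), (x p.2 - x p.1) =
      (vandermonde x).det := by
  rw [det_vandermonde, Finset.prod_filter, Fintype.prod_prod_type]
  refine Finset.prod_congr rfl fun i _ => ?_
  rw [← Finset.prod_filter, Finset.filter_lt_eq_Ioi]

/-- The Vandermonde determinant is harmonic on `ℝᴹ`. -/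
theorem stmt_14 (M : ℕ) (h : (Fin M → ℝ) → ℝ)
    (hh : ∀ x : Fin M → ℝ,
      h x = ∏ p ∈ Finset.univ.filter (fun p : Fin M × Fin M => p.1 < p.2),
        (x p.2 - x p.1)) :
    ∀ x : Fin M → ℝ, ∑ i : Fin M, pd i (pd i h) x = 0 := by
  obtain rfl : h = fun x => (vandermonde x).det :=
    funext fun x => (hh x).trans (prod_sub_of_lt_eq_det_vandermonde x)
  exact laplacian_det_vandermonde
end
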